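/- The mask m is optimal for the negation context: if m' is any mask such that for every signal s, (¬(s|_{m'}))|_m = (¬s)|_m, then m(t) = true implies m'(t) = true for all t. -/

import Mathlib

inductive TV : Type | T | F | U
deriving DecidableEq

open TV Set Pointwise

def maskApply (s : ℝ → TV) (m : ℝ → Bool) : ℝ → TV :=
  fun t => if m t then s t else TV.U

def tvNot : TV → TV
  | TV.T => TV.F | TV.F => TV.T | TV.U => TV.U

def tvOr : TV → TV → TV
  | TV.T, _ => TV.T
  | _, TV.T => TV.T
  | TV.F, TV.F => TV.F
  | _, _ => TV.U

def tvAnd : TV → TV → TV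
  | TV.F, _ => TV.F
  | _, TV.F => TV.F
  | TV.T, TV.T => TV.T
  | _, _ => TV.U

open Classical in
noncomputable def evOp (a b : ℝ) (s : ℝ → TV) : ℝ → TV :=
  fun t =>
    if ∃ t' ∈ Set.Icc (t + a) (t + b), s t' = TV.T then TV.T
    else if ∀ t' ∈ Set.Icc (t + a) (t + b), s t' = TV.F then TV.F
    else TV.U

open Classical in
noncomputable def glOp (a b : ℝ) (s : ℝ → TV) : ℝ → TV :=
  fun t =>
    if ∃ t' ∈ Set.Icc (t + a) (t + b), s t' = TV.F then TV.F
    else if ∀ t' ∈ Set.Icc (t + a) (t + b), s t' = TV.T then TV.T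
    else TV.U

open Classical in
noncomputable def pastMask (a b : ℝ) (m : ℝ → Bool) : ℝ → Bool :=
  fun t => decide (∃ t'' ∈ Set.Icc (t - b) (t - a) ∩ Set.Ici (0:ℝ), m t'' = true)

def orMask (s : ℝ → TV) : ℝ → Bool := fun t => !(s t == TV.T)

def andMask (s : ℝ → TV) : ℝ → Bool := fun t => !(s t == TV.F)

def Hset (a b : ℝ) (S : Set ℝ) : Set ℝ := {t | Set.Icc (t - b) (t - a) ⊆ S}

def Pset (a b : ℝ) (S : Set ℝ) : Set ℝ := {t | ∃ t' ∈ Set.Icc (t - b) (t - a), t' ∈ S}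
theorem neg_mask_optimal (m m' : ℝ → Bool)
    (hsuff : ∀ s : ℝ → TV,
      maskApply (fun t => tvNot (maskApply s m' t)) m = maskApply (fun t => tvNot (s t)) m) :
    ∀ t : ℝ, m t = true → m' t = true := by
  intro t hmt
  by_contra hm't
  -- At the constant signal `T`, dropping `t` from `m'` leaves `¬U = U` where `¬T = F` is required.
  have h := congrFun (hsuff fun _ => T) t
  simp [maskApply, hmt, hm't, tvNot] at h
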